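/- Let Φ ∈ ℝ^{m×n} be such that every set of at most m columns of Φ is linearly independent (i.e., every m columns have full rank). Let Ω ⊆ {1,…,n} with |Ω| < m, and let Γ ⊆ {1,…,n} with |Γ ∩ Ω| < |Ω| and |Γ| < m. Then the dimension of range(Φ_Γ) ∩ range(Φ_Ω) is strictly smaller than the dimension of range(Φ_Ω). -/

import Mathlib

open MeasureTheory

/-- The `j`-th column of `Φ`, as a vector of `ℝ^m`. -/
noncomputable def matCol {m n : ℕ} (Φ : Matrix (Fin m) (Fin n) ℝ) (j : Fin n) :
    EuclideanSpace ℝ (Fin m) := WithLp.toLp 2 (fun i => Φ i j)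

/-- The column space of the submatrix of `Φ` with columns indexed by `S`. -/
noncomputable def colSpan {m n : ℕ} (Φ : Matrix (Fin m) (Fin n) ℝ) (S : Finset (Fin n)) :
    Submodule ℝ (EuclideanSpace ℝ (Fin m)) :=
  Submodule.span ℝ (matCol Φ '' (S : Set (Fin n)))

lemma colSpan_finrank {m n : ℕ} (Φ : Matrix (Fin m) (Fin n) ℝ)
    (hfull : ∀ S : Finset (Fin n), S.card ≤ m →
      LinearIndependent ℝ (fun j : S => matCol Φ j))
    (S : Finset (Fin n)) (hS : S.card ≤ m) :
    Module.finrank ℝ (colSpan Φ S) = S.card := by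
  have h := hfull S hS
  have : colSpan Φ S = Submodule.span ℝ (Set.range (fun j : S => matCol Φ j)) := by
    rw [colSpan, Set.image_eq_range]; rfl
  rw [this, finrank_span_eq_card h, Fintype.card_coe]

lemma colSpan_union {m n : ℕ} (Φ : Matrix (Fin m) (Fin n) ℝ) (S T : Finset (Fin n)) :
    colSpan Φ (S ∪ T) = colSpan Φ S ⊔ colSpan Φ T := by
  rw [colSpan, colSpan, colSpan, Finset.coe_union, Set.image_union, Submodule.span_union]

lemma colSpan_mono {m n : ℕ} (Φ : Matrix (Fin m) (Fin n) ℝ) {S T : Finset (Fin n)}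
    (h : S ⊆ T) : colSpan Φ S ≤ colSpan Φ T :=
  Submodule.span_mono (Set.image_mono (Finset.coe_subset.mpr h))

/-- If every set of at most `m` columns of `Φ` is linearly independent, `|Ω| < m`,
`|Γ ∩ Ω| < |Ω|` and `|Γ| < m`, then
`dim (range(Φ_Γ) ⊓ range(Φ_Ω)) < dim range(Φ_Ω)`. -/
theorem finrank_inter_lt
    {m n : ℕ} (Φ : Matrix (Fin m) (Fin n) ℝ)
    (hfull : ∀ S : Finset (Fin n), S.card ≤ m →
      LinearIndependent ℝ (fun j : S => matCol Φ j))
    (Ω Γ : Finset (Fin n)) (hΩ : Ω.card < m)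
    (hΓΩ : (Γ ∩ Ω).card < Ω.card) (hΓ : Γ.card < m) :
    Module.finrank ℝ (colSpan Φ Γ ⊓ colSpan Φ Ω : Submodule ℝ (EuclideanSpace ℝ (Fin m)))
      < Module.finrank ℝ (colSpan Φ Ω) := by
  have hA : Module.finrank ℝ (colSpan Φ Γ) = Γ.card := colSpan_finrank Φ hfull Γ hΓ.le
  have hB : Module.finrank ℝ (colSpan Φ Ω) = Ω.card := colSpan_finrank Φ hfull Ω hΩ.le
  have hsum :
      Module.finrank ℝ ↥(colSpan Φ Γ ⊔ colSpan Φ Ω)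
        + Module.finrank ℝ ↥(colSpan Φ Γ ⊓ colSpan Φ Ω)
      = Module.finrank ℝ (colSpan Φ Γ) + Module.finrank ℝ (colSpan Φ Ω) :=
    Submodule.finrank_sup_add_finrank_inf_eq _ _
  have hsupgt : Γ.card < Module.finrank ℝ ↥(colSpan Φ Γ ⊔ colSpan Φ Ω) := by
    rw [← colSpan_union]
    rcases le_or_gt (Γ ∪ Ω).card m with hle | hgt
    · rw [colSpan_finrank Φ hfull _ hle]
      have := Finset.card_union_add_card_inter Γ Ω
      omega
    · obtain ⟨S, hSsub, hScard⟩ := Finset.exists_subset_card_eq hgt.le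
      calc Γ.card < m := hΓ
        _ = Module.finrank ℝ (colSpan Φ S) := by rw [colSpan_finrank Φ hfull S hScard.le, hScard]
        _ ≤ Module.finrank ℝ (colSpan Φ (Γ ∪ Ω)) :=
            Submodule.finrank_mono (colSpan_mono Φ hSsub)
  omega
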